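/- Let Ĝ be a finite connected simple graph with edge set E(Ĝ) = {e0, e1, ..., e_m}, let u, v be the endpoints of e0, and let G = Ĝ − e0 (assumed connected, with u ≠ v), with Kirchhoff polynomial ψ_G and second Symanzik polynomial φ_G with respect to u, v. Then, as an identity in [0,∞] of Lebesgue integrals, ∫_{(0,∞)^m} ψ_Ĝ(α_{e0}, α_{e1},...,α_{e_{m-1}}, 1)^{-2} dα_{e0} dα_{e1} ... dα_{e_{m-1}} = ∫_{(0,∞)^{m-1}} [ψ_G(α_{e1},...,α_{e_{m-1}},1) · φ_G(α_{e1},...,α_{e_{m-1}},1)]^{-1} dα_{e1} ... dα_{e_{m-1}}; that is, the period of the glued vacuum graph Ĝ equals the integral of 1/(ψ_G φ_G) over the affine chart α_{e_m}=1. -/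

import Mathlib

open MeasureTheory SimpleGraph Finset

noncomputable section

open Classical in
/-- The Kirchhoff (first Symanzik) polynomial of `G`, as a real-valued function of an
assignment `α` of values to the (potential) edges: `ψ_G(α) = ∑_T ∏_{e ∉ T} α e`,
the sum over all spanning trees `T` of `G`. -/
def psiFun {V : Type} [Fintype V] [DecidableEq V] (G : SimpleGraph V) (α : Sym2 V → ℝ) : ℝ :=
  ∑ T ∈ (Set.toFinite G.edgeSet).toFinset.powerset,
    if (SimpleGraph.fromEdgeSet (↑T : Set (Sym2 V))).IsTree then
      ∏ e ∈ (Set.toFinite G.edgeSet).toFinset \ T, α e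
    else 0

open Classical in
/-- The second Symanzik polynomial of `G` with marked vertices `u`, `v`, as a
real-valued function: `φ_G(α) = ∑_F ∏_{e ∉ F} α e`, the sum over all spanning
2-forests `F` (acyclic spanning subgraphs with exactly two connected components)
of `G` separating `u` from `v`. -/
def phiFun {V : Type} [Fintype V] [DecidableEq V] (G : SimpleGraph V) (u v : V) (α : Sym2 V → ℝ) : ℝ :=
  ∑ T ∈ (Set.toFinite G.edgeSet).toFinset.powerset,
    if ((SimpleGraph.fromEdgeSet (↑T : Set (Sym2 V))).IsAcyclic ∧
        Nat.card (SimpleGraph.fromEdgeSet (↑T : Set (Sym2 V))).ConnectedComponent = 2 ∧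
        ¬ (SimpleGraph.fromEdgeSet (↑T : Set (Sym2 V))).Reachable u v) then
      ∏ e ∈ (Set.toFinite G.edgeSet).toFinset \ T, α e
    else 0

/-!
Deleting or keeping the glued edge `e₀ = uv` splits the spanning trees of `Ĝ = G + uv`:
those avoiding `e₀` are the spanning trees of `G`, and those containing it are `e₀` together
with a spanning 2-forest of `G` separating `u` from `v`. Hence `ψ_Ĝ = α_{e₀} ψ_G + φ_G`, and
integrating out `α_{e₀}` first (Tonelli) with `∫₀^∞ (t a + b)⁻² dt = (a b)⁻¹` leaves
`(ψ_G φ_G)⁻¹`; both polynomials are positive on positive weights because `G` is connected.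
-/
namespace SimpleGraph

variable {V : Type*} {G H : SimpleGraph V} {u v : V}

lemma Reachable.of_sup_edge {x y : V} (h : (H ⊔ edge u v).Reachable x y) :
    H.Reachable x y ∨ (H.Reachable x u ∧ H.Reachable v y) ∨
      (H.Reachable x v ∧ H.Reachable u y) := by
  obtain ⟨p⟩ := h
  induction p with
  | nil => exact .inl .rfl
  | @cons a b c hab q ih =>
    rcases hab with hab | hab
    · have hab := hab.reachable
      rcases ih with h | ⟨h, h'⟩ | ⟨h, h'⟩
      exacts [.inl (hab.trans h), .inr (.inl ⟨hab.trans h, h'⟩), .inr (.inr ⟨hab.trans h, h'⟩)]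
    · rcases ((edge_adj ..).mp hab).1 with ⟨rfl, rfl⟩ | ⟨rfl, rfl⟩ <;>
        rcases ih with h | ⟨h, h'⟩ | ⟨h, h'⟩
      exacts [.inr (.inl ⟨.rfl, h⟩), .inr (.inl ⟨.rfl, h'⟩), .inl h', .inr (.inr ⟨.rfl, h⟩),
        .inl h', .inl (h.symm.trans h')]

lemma connected_sup_edge_iff (huv : u ≠ v) :
    (H ⊔ edge u v).Connected ↔ ∀ x, H.Reachable x u ∨ H.Reachable x v := by
  have huv' : (H ⊔ edge u v).Reachable u v :=
    Adj.reachable (.inr ((edge_adj ..).mpr ⟨.inl ⟨rfl, rfl⟩, huv⟩))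
  rw [connected_iff_exists_forall_reachable]
  constructor
  · rintro ⟨r, hr⟩ x
    rcases ((hr x).symm.trans (hr u)).of_sup_edge with h | h | h
    exacts [.inl h, .inl h.1, .inr h.1]
  · refine fun h ↦ ⟨u, fun x ↦ ?_⟩
    rcases h x with h | h
    exacts [(h.mono le_sup_left).symm, huv'.trans (h.mono le_sup_left).symm]

lemma card_connectedComponent_eq_two_iff (h : ¬H.Reachable u v) :
    Nat.card H.ConnectedComponent = 2 ↔ ∀ x, H.Reachable x u ∨ H.Reachable x v := by
  have hne : H.connectedComponentMk v ≠ H.connectedComponentMk u :=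
    fun h' ↦ h (ConnectedComponent.exact h').symm
  rw [Nat.card_eq_two_iff' (H.connectedComponentMk u)]
  constructor
  · rintro ⟨c, -, hc⟩ x
    by_cases hx : H.connectedComponentMk x = H.connectedComponentMk u
    · exact .inl (ConnectedComponent.exact hx)
    · exact .inr (ConnectedComponent.exact ((hc _ hx).trans (hc _ hne).symm))
  · refine fun h ↦ ⟨H.connectedComponentMk v, hne, fun c hc ↦ ?_⟩
    induction c using ConnectedComponent.ind with | h x
    rcases h x with h | h
    exacts [absurd (ConnectedComponent.sound h) hc, ConnectedComponent.sound h]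

lemma isTree_sup_edge_iff (huv : u ≠ v) (hadj : ¬H.Adj u v) :
    (H ⊔ edge u v).IsTree ↔
      H.IsAcyclic ∧ Nat.card H.ConnectedComponent = 2 ∧ ¬H.Reachable u v := by
  have hacyc : (H ⊔ edge u v).IsAcyclic ↔ H.IsAcyclic ∧ ¬H.Reachable u v := by
    simp [isAcyclic_sup_fromEdgeSet_iff, huv, hadj]
  rw [isTree_iff, hacyc, connected_sup_edge_iff huv]
  constructor
  · rintro ⟨hconn, hH, hr⟩
    exact ⟨hH, (card_connectedComponent_eq_two_iff hr).mpr hconn, hr⟩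
  · rintro ⟨hH, hcard, hr⟩
    exact ⟨(card_connectedComponent_eq_two_iff hr).mp hcard, hH, hr⟩

lemma Connected.exists_isAcyclic_card_two_not_reachable (hG : G.Connected) (huv : u ≠ v) :
    ∃ F ≤ G, F.IsAcyclic ∧ Nat.card F.ConnectedComponent = 2 ∧ ¬F.Reachable u v := by
  obtain ⟨T, hTG, hT⟩ := hG.exists_isTree_le
  obtain ⟨p, hp⟩ := hT.connected.exists_isPath u v
  cases p with
  | nil => exact absurd rfl huv
  | @cons _ x _ hux q =>
    rw [Walk.cons_isPath_iff] at hp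
    set F := T.deleteEdges {s(u, x)}
    have hFT : F ⊔ edge u x = T := sdiff_sup_cancel ((edge_le_iff _).mpr (.inr hux))
    obtain ⟨hFacyc, hFcard, hFux⟩ :=
      (isTree_sup_edge_iff hux.ne (by simp [F])).mp (hFT ▸ hT)
    have hxv : F.Reachable x v := ⟨q.toDeleteEdges {s(u, x)} fun e he h ↦
      hp.2 (q.fst_mem_support_of_mem_edges ((Set.mem_singleton_iff.mp h) ▸ he))⟩
    exact ⟨F, (deleteEdges_le _).trans hTG, hFacyc, hFcard, fun h ↦ hFux (h.trans hxv.symm)⟩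

end SimpleGraph

section SumOverEdgeSubsets

variable {ι : Type*} [DecidableEq ι] {E : Finset ι} {P : Finset ι → Prop} [DecidablePred P]
  {α : ι → ℝ}

lemma sum_powerset_ite_prod_congr {β : ι → ℝ} (h : ∀ e ∈ E, α e = β e) :
    (∑ T ∈ E.powerset, if P T then ∏ e ∈ E \ T, α e else 0) =
      ∑ T ∈ E.powerset, if P T then ∏ e ∈ E \ T, β e else 0 :=
  sum_congr rfl fun _ _ ↦ by rw [prod_congr rfl fun e he ↦ h e (mem_sdiff.mp he).1]

lemma sum_powerset_ite_prod_pos (hα : ∀ e ∈ E, 0 < α e) {T : Finset ι} (hTE : T ⊆ E)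
    (hT : P T) : 0 < ∑ T ∈ E.powerset, if P T then ∏ e ∈ E \ T, α e else 0 := by
  have hprod : ∀ S ⊆ E, 0 < ∏ e ∈ E \ S, α e := fun S _ ↦
    prod_pos fun e he ↦ hα e (mem_sdiff.mp he).1
  refine sum_pos' (fun S hS ↦ ?_) ⟨T, mem_powerset.mpr hTE, by simpa [hT] using hprod T hTE⟩
  split_ifs
  exacts [(hprod S (mem_powerset.mp hS)).le, le_rfl]

end SumOverEdgeSubsets

section Symanzik

open Classical

variable {V : Type} [Fintype V] [DecidableEq V] {G : SimpleGraph V} {u v : V}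
  {α β : Sym2 V → ℝ}

lemma psiFun_congr (h : ∀ e ∈ G.edgeSet, α e = β e) : psiFun G α = psiFun G β := by
  unfold psiFun
  exact sum_powerset_ite_prod_congr fun e he ↦ h e (by simpa using he)

lemma phiFun_congr (h : ∀ e ∈ G.edgeSet, α e = β e) : phiFun G u v α = phiFun G u v β := by
  unfold phiFun
  exact sum_powerset_ite_prod_congr fun e he ↦ h e (by simpa using he)

lemma psiFun_pos (hG : G.Connected) (hα : ∀ e ∈ G.edgeSet, 0 < α e) : 0 < psiFun G α := by
  obtain ⟨T, hTG, hT⟩ := hG.exists_isTree_le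
  unfold psiFun
  refine sum_powerset_ite_prod_pos (fun e he ↦ hα e (by simpa using he))
    (T := (Set.toFinite T.edgeSet).toFinset) (by simpa using edgeSet_mono hTG) ?_
  simpa using hT

lemma phiFun_pos (hG : G.Connected) (huv : u ≠ v) (hα : ∀ e ∈ G.edgeSet, 0 < α e) :
    0 < phiFun G u v α := by
  obtain ⟨F, hFG, hF⟩ := hG.exists_isAcyclic_card_two_not_reachable huv
  unfold phiFun
  refine sum_powerset_ite_prod_pos (fun e he ↦ hα e (by simpa using he))
    (T := (Set.toFinite F.edgeSet).toFinset) (by simpa using edgeSet_mono hFG) ?_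
  simpa using hF

lemma measurable_psiFun (G : SimpleGraph V) : Measurable (psiFun G) :=
  Finset.measurable_sum _ fun _ _ ↦ by split_ifs <;> fun_prop

lemma psiFun_sup_edge (huv : u ≠ v) (hadj : ¬G.Adj u v) :
    psiFun (G ⊔ edge u v) α = α s(u, v) * psiFun G α + phiFun G u v α := by
  set E := (Set.toFinite G.edgeSet).toFinset
  have huvE : s(u, v) ∉ E := by simpa [E] using hadj
  have hE : (Set.toFinite (G ⊔ edge u v).edgeSet).toFinset = insert s(u, v) E := by
    ext; simp [E, edgeSet_edge_of_ne huv]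
  unfold psiFun phiFun
  rw [hE, sum_powerset_insert huvE, mul_sum]
  congr 1 <;> refine sum_congr rfl fun T hT ↦ ?_
  · have huvT : s(u, v) ∉ T := fun h ↦ huvE (mem_powerset.mp hT h)
    rw [insert_sdiff_of_notMem _ huvT, prod_insert fun h ↦ huvE (mem_sdiff.mp h).1, mul_ite,
      mul_zero]
  · have huvT : s(u, v) ∉ T := fun h ↦ huvE (mem_powerset.mp hT h)
    have hgraph : fromEdgeSet ↑(insert s(u, v) T) = fromEdgeSet ↑T ⊔ edge u v := by
      rw [coe_insert, Set.insert_eq, fromEdgeSet_union, sup_comm, edge]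
    rw [hgraph, insert_sdiff_insert, sdiff_insert_of_notMem huvE]
    exact if_congr (isTree_sup_edge_iff huv (by simp [huvT])) rfl rfl

lemma psiFun_sup_edge_extend_cons (huv : u ≠ v) (hadj : ¬G.Adj u v) {n : ℕ}
    {f : Fin (n + 1) → Sym2 V} (hf : Function.Injective f) (hf0 : f 0 = s(u, v))
    (hG : G.edgeSet ⊆ Set.range fun i : Fin n ↦ f i.succ) (t : ℝ) (g : Fin n → ℝ) :
    psiFun (G ⊔ edge u v) (Function.extend f (Fin.cons t g) 0) =
      t * psiFun G (Function.extend (fun i : Fin n ↦ f i.succ) g 0) +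
        phiFun G u v (Function.extend (fun i : Fin n ↦ f i.succ) g 0) := by
  have hweights : ∀ e ∈ G.edgeSet,
      Function.extend f (Fin.cons t g) 0 e = Function.extend (fun i : Fin n ↦ f i.succ) g 0 e := by
    rintro _ he
    obtain ⟨i, rfl⟩ := hG he
    rw [hf.extend_apply, Fin.cons_succ]
    exact ((hf.comp (Fin.succ_injective _)).extend_apply g 0 i).symm
  rw [psiFun_sup_edge huv hadj, psiFun_congr hweights, phiFun_congr hweights, ← hf0,
    hf.extend_apply, Fin.cons_zero]

end Symanzik

lemma measurable_extend_zero {ι κ : Type*} (f : ι → κ) :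
    Measurable fun g : ι → ℝ ↦ Function.extend f g 0 := by
  refine measurable_pi_lambda _ fun e ↦ ?_
  by_cases h : ∃ i, f i = e
  · simp only [Function.extend, dif_pos h]
    exact measurable_pi_apply _
  · simp only [Function.extend, dif_neg h]
    exact measurable_const

lemma extend_snoc_one_pos {ι : Type*} {n : ℕ} {f : Fin (n + 1) → ι} (hf : Function.Injective f)
    {w : Fin n → ℝ} (hw : ∀ j, 0 < w j) {e : ι} (he : e ∈ Set.range f) :
    0 < Function.extend f (Fin.snoc w 1) 0 e := by
  obtain ⟨i, rfl⟩ := he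
  rw [hf.extend_apply]
  induction i using Fin.lastCases with
  | last => simp
  | cast j => simpa using hw j

section Integrals

open Set Filter Topology

lemma lintegral_Ioi_inv_sq_mul_add {a b : ℝ} (ha : 0 < a) (hb : 0 < b) :
    ∫⁻ t in Ioi (0 : ℝ), ENNReal.ofReal (((t * a + b) ^ 2)⁻¹) = ENNReal.ofReal ((a * b)⁻¹) := by
  have hderiv : ∀ t ∈ Ici (0 : ℝ),
      HasDerivAt (fun t ↦ -(a⁻¹ * (t * a + b)⁻¹)) (((t * a + b) ^ 2)⁻¹) t := by
    intro t ht
    have hlin : HasDerivAt (fun t : ℝ ↦ t * a + b) a t := by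
      simpa using ((hasDerivAt_id t).mul_const a).add_const b
    have hne : t * a + b ≠ 0 := by nlinarith [mem_Ici.mp ht]
    refine ((hlin.inv hne).const_mul a⁻¹).neg.congr_deriv ?_
    field_simp
  have hlim : Tendsto (fun t : ℝ ↦ -(a⁻¹ * (t * a + b)⁻¹)) atTop (𝓝 0) := by
    simpa using ((tendsto_atTop_add_const_right _ b
      (tendsto_id.atTop_mul_const ha)).inv_tendsto_atTop.const_mul a⁻¹).neg
  have hnonneg : ∀ t : ℝ, 0 ≤ ((t * a + b) ^ 2)⁻¹ := fun t ↦ by positivity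
  rw [← ofReal_integral_eq_lintegral_ofReal
      (integrableOn_Ioi_deriv_of_nonneg' hderiv (fun t _ ↦ hnonneg t) hlim)
      (ae_of_all _ hnonneg),
    integral_Ioi_of_hasDerivAt_of_nonneg' hderiv (fun t _ ↦ hnonneg t) hlim]
  congr 1
  field_simp
  ring

lemma lintegral_pi_fin_succ {α : Type*} [MeasurableSpace α] (μ : Measure α) [SigmaFinite μ]
    {n : ℕ} {f : (Fin (n + 1) → α) → ENNReal} (hf : Measurable f) :
    ∫⁻ z, f z ∂Measure.pi (fun _ ↦ μ) =
      ∫⁻ w, ∫⁻ t, f (Fin.cons t w) ∂μ ∂Measure.pi (fun _ ↦ μ) := by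
  set e := MeasurableEquiv.piFinSuccAbove (fun _ : Fin (n + 1) ↦ α) 0
  have hmp := (measurePreserving_piFinSuccAbove (fun _ : Fin (n + 1) ↦ μ) 0).symm
  rw [← hmp.lintegral_comp_emb e.symm.measurableEmbedding,
    lintegral_prod_symm (fun p ↦ f (e.symm p))
      (hf.comp (MeasurableEquiv.measurable _)).aemeasurable]
  simp only [e, MeasurableEquiv.piFinSuccAbove_symm_apply, Fin.insertNthEquiv, Equiv.coe_fn_mk,
    Fin.insertNth_zero']

lemma setLIntegral_pi_Ioi_fin_succ {n : ℕ} {f : (Fin (n + 1) → ℝ) → ENNReal}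
    (hf : Measurable f) :
    ∫⁻ z in univ.pi fun _ ↦ Ioi 0, f z =
      ∫⁻ w in univ.pi fun _ ↦ Ioi 0, ∫⁻ t in Ioi 0, f (Fin.cons t w) := by
  simp only [volume_pi, Measure.restrict_pi_pi]
  exact lintegral_pi_fin_succ _ hf

end Integrals

theorem statement2_general {V : Type} [Fintype V] [DecidableEq V]
    (Ghat : SimpleGraph V)
    (u v : V) (huv : u ≠ v) (he0 : s(u, v) ∈ Ghat.edgeSet)
    (G : SimpleGraph V) (hG : G = Ghat.deleteEdges {s(u, v)}) (hGconn : G.Connected)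
    (k : ℕ) (edh : Fin (k + 2) → Sym2 V) (hinj : Function.Injective edh)
    (hrange : Set.range edh = Ghat.edgeSet) (h0 : edh 0 = s(u, v)) :
    ∫⁻ z : Fin (k + 1) → ℝ in Set.univ.pi fun _ => Set.Ioi 0,
        ENNReal.ofReal ((psiFun Ghat (Function.extend edh (Fin.snoc z 1) 0) ^ 2)⁻¹)
      = ∫⁻ w : Fin k → ℝ in Set.univ.pi fun _ => Set.Ioi 0,
          ENNReal.ofReal
            ((psiFun G (Function.extend (fun i : Fin (k + 1) => edh i.succ) (Fin.snoc w 1) 0) *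
              phiFun G u v
                (Function.extend (fun i : Fin (k + 1) => edh i.succ) (Fin.snoc w 1) 0))⁻¹) := by
  have hadj : ¬G.Adj u v := by simp [hG]
  have hGhat : Ghat = G ⊔ edge u v := by
    rw [hG]; exact (sdiff_sup_cancel ((edge_le_iff _).mpr (.inr he0))).symm
  have hGedges : G.edgeSet ⊆ Set.range fun i : Fin (k + 1) ↦ edh i.succ := by
    intro e he
    obtain ⟨j, rfl⟩ : e ∈ Set.range edh := hrange ▸ edgeSet_mono (hG ▸ deleteEdges_le _) he
    obtain ⟨i, rfl⟩ := Fin.exists_succ_eq_of_ne_zero (x := j) (by rintro rfl; simp [hG, h0] at he)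
    exact ⟨i, rfl⟩
  have hmeas : Measurable fun z : Fin (k + 1) → ℝ ↦
      ENNReal.ofReal ((psiFun Ghat (Function.extend edh (Fin.snoc z 1) 0) ^ 2)⁻¹) :=
    ENNReal.measurable_ofReal.comp (((measurable_psiFun Ghat).comp
      ((measurable_extend_zero edh).comp
        (continuous_id.finSnoc continuous_const).measurable)).pow_const 2).inv
  rw [setLIntegral_pi_Ioi_fin_succ hmeas]
  refine setLIntegral_congr_fun (MeasurableSet.univ_pi fun _ ↦ measurableSet_Ioi) fun w hw ↦ ?_
  have hpos : ∀ e ∈ G.edgeSet, 0 < Function.extend (fun i ↦ edh i.succ) (Fin.snoc w 1) 0 e :=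
    fun e he ↦ extend_snoc_one_pos (hinj.comp (Fin.succ_injective _)) (by simpa using hw)
      (hGedges he)
  simp_rw [← Fin.cons_snoc_eq_snoc_cons, hGhat,
    psiFun_sup_edge_extend_cons huv hadj hinj h0 hGedges]
  exact lintegral_Ioi_inv_sq_mul_add (psiFun_pos hGconn hpos) (phiFun_pos hGconn huv hpos)

/-- The period of the glued vacuum graph `Ĝ` equals the projective integral of
`1/(ψ_G φ_G)`: if `Ĝ` is connected with edges `e₀, e₁, …, e_{k+1}` (listed by `edh`,
with glued edge `e₀ = {u, v}`) and `G = Ĝ - e₀` is connected, then, as an identity in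
`[0, ∞]`, `∫_{(0,∞)^{k+1}} ψ_Ĝ(α_{e₀}, …, α_{e_k}, 1)^{-2} = ∫_{(0,∞)^k}
(ψ_G φ_G)(α_{e₁}, …, α_{e_k}, 1)^{-1}`. -/
theorem statement2 {V : Type} [Fintype V] [DecidableEq V]
    (Ghat : SimpleGraph V) (hconn : Ghat.Connected)
    (u v : V) (huv : u ≠ v) (he0 : s(u, v) ∈ Ghat.edgeSet)
    (G : SimpleGraph V) (hG : G = Ghat.deleteEdges {s(u, v)}) (hGconn : G.Connected)
    (k : ℕ) (edh : Fin (k + 2) → Sym2 V) (hinj : Function.Injective edh)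
    (hrange : Set.range edh = Ghat.edgeSet) (h0 : edh 0 = s(u, v)) :
    ∫⁻ z : Fin (k + 1) → ℝ in Set.univ.pi fun _ => Set.Ioi 0,
        ENNReal.ofReal ((psiFun Ghat (Function.extend edh (Fin.snoc z 1) 0) ^ 2)⁻¹)
      = ∫⁻ w : Fin k → ℝ in Set.univ.pi fun _ => Set.Ioi 0,
          ENNReal.ofReal
            ((psiFun G (Function.extend (fun i : Fin (k + 1) => edh i.succ) (Fin.snoc w 1) 0) *
              phiFun G u v
                (Function.extend (fun i : Fin (k + 1) => edh i.succ) (Fin.snoc w 1) 0))⁻¹) :=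
  statement2_general Ghat u v huv he0 G hG hGconn k edh hinj hrange h0
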